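/- arXiv:1809.08515 — 4 statements merged into one kernel-verified Lean document; each statement's English description precedes it below -/
import Mathlib

section
/- Let m, n be positive integers and let w_1 < w_2 < ... < w_m be integers with 1 ≤ w_k ≤ m+n. Suppose that for every k with 1 ≤ k ≤ m we have w_k / k ≥ (m+n)/m (i.e. m·w_k ≥ (m+n)·k). Then for every choice of real numbers t_1 ≥ t_2 ≥ ... ≥ t_{m+n} with t_1 + ... + t_{m+n} = 0, we have t_{w_1} + t_{w_2} + ... + t_{w_m} ≤ 0. -/
open Finset

private lemma abel_aux (N : ℕ) (d u : ℕ → ℝ)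
    (hu : ∀ i, i + 1 < N → u (i + 1) ≤ u i)
    (hD : ∀ j, j ≤ N → ∑ i ∈ range j, d i ≤ 0)
    (hDN : ∑ i ∈ range N, d i = 0) :
    ∑ i ∈ range N, d i * u i ≤ 0 := by
  have h := Finset.sum_range_by_parts u d N
  simp only [smul_eq_mul] at h
  have h1 : ∑ i ∈ range N, d i * u i = ∑ i ∈ range N, u i * d i := by
    exact Finset.sum_congr rfl fun i _ => mul_comm _ _
  rw [h1, h, hDN, mul_zero, zero_sub, neg_nonpos]
  apply Finset.sum_nonneg
  intro i hi
  rw [Finset.mem_range] at hi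
  have h2 : u (i + 1) - u i ≤ 0 := by
    have := hu i (by omega); linarith
  have h3 : ∑ j ∈ range (i + 1), d j ≤ 0 := hD (i + 1) (by omega)
  nlinarith [mul_nonneg (neg_nonneg.2 h2) (neg_nonneg.2 h3)]

/-- If `w₁ < … < w_m` in `{1,…,m+n}` satisfy `m·w_k ≥ (m+n)·k` for all `k`, then for
any weakly decreasing reals `t₁ ≥ … ≥ t_{m+n}` summing to zero, `∑ t_{w_k} ≤ 0`. -/
theorem stmt_0 (m n : ℕ) (hm : 0 < m) (hn : 0 < n) (w : ℕ → ℕ)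
    (hwmono : ∀ k l, 1 ≤ k → k < l → l ≤ m → w k < w l)
    (hwlb : ∀ k, 1 ≤ k → k ≤ m → 1 ≤ w k)
    (hwub : ∀ k, 1 ≤ k → k ≤ m → w k ≤ m + n)
    (hslope : ∀ k, 1 ≤ k → k ≤ m → (m + n) * k ≤ m * w k)
    (t : ℕ → ℝ)
    (ht : ∀ i j, 1 ≤ i → i ≤ j → j ≤ m + n → t j ≤ t i)
    (hsum : ∑ i ∈ Finset.Icc 1 (m + n), t i = 0) :
    ∑ k ∈ Finset.Icc 1 m, t (w k) ≤ 0 := by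
  set N := m + n with hN
  have hNpos : 0 < N := by omega
  set c : ℕ → ℕ := fun j => ((Finset.Icc 1 m).filter (fun k => w k = j)).card with hc
  set r : ℝ := (m : ℝ) / N with hr
  -- partial sums of c are cardinalities of the down-filters
  have hcard : ∀ j, ∑ i ∈ range j, c (i + 1)
      = ((Finset.Icc 1 m).filter (fun k => w k ≤ j)).card := by
    intro j
    have hmap : ∀ k ∈ (Finset.Icc 1 m).filter (fun k => w k ≤ j),
        w k ∈ Finset.Icc 1 j := by
      intro k hk
      simp only [Finset.mem_filter, Finset.mem_Icc] at hk ⊢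
      exact ⟨hwlb k hk.1.1 hk.1.2, hk.2⟩
    have := Finset.sum_fiberwise_of_maps_to hmap (fun _ => (1 : ℕ))
    simp only [Finset.sum_const, smul_eq_mul, mul_one] at this
    rw [← this]
    have hIcc : ∑ j' ∈ Finset.Icc 1 j,
        (((Finset.Icc 1 m).filter (fun k => w k ≤ j)).filter (fun k => w k = j')).card
        = ∑ j' ∈ Finset.Icc 1 j, c j' := by
      apply Finset.sum_congr rfl
      intro j' hj'
      rw [Finset.mem_Icc] at hj'
      congr 1
      ext k
      simp only [Finset.filter_filter, Finset.mem_filter, hc]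
      constructor
      · rintro ⟨h1, _, h3⟩; exact ⟨h1, h3⟩
      · rintro ⟨h1, h3⟩; exact ⟨h1, by omega, h3⟩
    rw [hIcc]
    rw [show Finset.Icc 1 j = Finset.Ico 1 (j + 1) by rw [Finset.Ico_add_one_right_eq_Icc],
      Finset.sum_Ico_eq_sum_range]
    simp [add_comm]
  -- slope bound on partial sums
  have hA : ∀ j, N * ((Finset.Icc 1 m).filter (fun k => w k ≤ j)).card ≤ m * j := by
    intro j
    set S := (Finset.Icc 1 m).filter (fun k => w k ≤ j) with hS
    rcases Finset.eq_empty_or_nonempty S with h | h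
    · simp [h]
    · set M := S.max' h with hM
      have hMS : M ∈ S := S.max'_mem h
      simp only [hS, Finset.mem_filter, Finset.mem_Icc] at hMS
      have hSeq : S = Finset.Icc 1 M := by
        ext k
        simp only [hS, Finset.mem_filter, Finset.mem_Icc]
        constructor
        · intro hk
          refine ⟨hk.1.1, ?_⟩
          exact Finset.le_max' S k (by simp [hS, Finset.mem_filter, Finset.mem_Icc]; exact ⟨⟨hk.1.1, hk.1.2⟩, hk.2⟩)
        · intro hk
          rcases eq_or_lt_of_le hk.2 with h' | h'
          · subst h'; exact ⟨⟨hMS.1.1, hMS.1.2⟩, hMS.2⟩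
          · refine ⟨⟨hk.1, by omega⟩, ?_⟩
            have := hwmono k M hk.1 h' hMS.1.2
            omega
      have hcardM : S.card = M := by rw [hSeq, Nat.card_Icc]; omega
      rw [hcardM]
      calc N * M ≤ m * w M := hslope M hMS.1.1 hMS.1.2
        _ ≤ m * j := Nat.mul_le_mul_left m hMS.2
  -- apply Abel
  have key := abel_aux N (fun i => (c (i + 1) : ℝ) - r) (fun i => t (i + 1))
    (by
      intro i hi
      exact ht (i + 1) (i + 2) (by omega) (by omega) (by omega))
    (by
      intro j hj
      simp only [Finset.sum_sub_distrib, Finset.sum_const, Finset.card_range, nsmul_eq_mul]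
      have h1 : ∑ i ∈ range j, ((c (i + 1) : ℝ)) = (((Finset.Icc 1 m).filter (fun k => w k ≤ j)).card : ℝ) := by
        rw [← Nat.cast_sum]; exact_mod_cast hcard j
      rw [h1, hr, sub_nonpos, mul_div_assoc', le_div_iff₀ (by positivity : (0:ℝ) < N)]
      have h2 : (N * ((Finset.Icc 1 m).filter (fun k => w k ≤ j)).card : ℕ) ≤ m * j := hA j
      have h3 := (Nat.cast_le (α := ℝ)).2 h2
      push_cast at h3
      linarith)
    (by
      simp only [Finset.sum_sub_distrib, Finset.sum_const, Finset.card_range, nsmul_eq_mul]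
      have h1 : ∑ i ∈ range N, ((c (i + 1) : ℝ)) = (((Finset.Icc 1 m).filter (fun k => w k ≤ N)).card : ℝ) := by
        rw [← Nat.cast_sum]; exact_mod_cast hcard N
      have h2 : (Finset.Icc 1 m).filter (fun k => w k ≤ N) = Finset.Icc 1 m := by
        apply Finset.filter_true_of_mem
        intro k hk
        rw [Finset.mem_Icc] at hk
        exact hwub k hk.1 hk.2
      rw [h1, h2, Nat.card_Icc, hr]
      field_simp
      simp)
  -- identify the Abel sum with the target sum
  have hIccrange : ∀ f : ℕ → ℝ, ∑ j ∈ Finset.Icc 1 N, f j = ∑ i ∈ range N, f (i + 1) := by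
    intro f
    rw [show Finset.Icc 1 N = Finset.Ico 1 (N + 1) by rw [Finset.Ico_add_one_right_eq_Icc],
      Finset.sum_Ico_eq_sum_range]
    simp [add_comm]
  have hfib : ∑ i ∈ range N, (c (i + 1) : ℝ) * t (i + 1) = ∑ k ∈ Finset.Icc 1 m, t (w k) := by
    rw [← hIccrange (fun j => (c j : ℝ) * t j)]
    have hmap : ∀ k ∈ Finset.Icc 1 m, w k ∈ Finset.Icc 1 N := by
      intro k hk
      rw [Finset.mem_Icc] at hk ⊢
      exact ⟨hwlb k hk.1 hk.2, hwub k hk.1 hk.2⟩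
    rw [← Finset.sum_fiberwise_of_maps_to hmap (fun k => t (w k))]
    apply Finset.sum_congr rfl
    intro j _
    have : ∑ k ∈ (Finset.Icc 1 m).filter (fun k => w k = j), t (w k)
        = ∑ k ∈ (Finset.Icc 1 m).filter (fun k => w k = j), t j := by
      apply Finset.sum_congr rfl
      intro k hk
      rw [Finset.mem_filter] at hk
      rw [hk.2]
    rw [this, Finset.sum_const, nsmul_eq_mul, hc]
  have hsum' : ∑ i ∈ range N, t (i + 1) = 0 := by
    rw [← hIccrange t]; exact hsum
  have expand : ∑ i ∈ range N, ((c (i + 1) : ℝ) - r) * t (i + 1)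
      = ∑ k ∈ Finset.Icc 1 m, t (w k) - r * ∑ i ∈ range N, t (i + 1) := by
    rw [← hfib, Finset.mul_sum, ← Finset.sum_sub_distrib]
    apply Finset.sum_congr rfl
    intro i _
    ring
  rw [expand, hsum', mul_zero, sub_zero] at key
  exact key
end

section
/- Let m, n be positive integers and let w_1 < w_2 < ... < w_m be integers in {1, ..., m+n}. Suppose there exists k with 1 ≤ k ≤ m such that m·w_k < (m+n)·k. Then there exist real numbers t_1 ≥ t_2 ≥ ... ≥ t_{m+n} with t_1 + ... + t_{m+n} = 0 and t_{w_1} + ... + t_{w_m} > 0. -/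
/-- If `w₁ < … < w_m` in `{1,…,m+n}` satisfy `m·w_k < (m+n)·k` for some `k`, then there
exist weakly decreasing reals `t₁ ≥ … ≥ t_{m+n}` summing to zero with `∑ t_{w_k} > 0`. -/
theorem stmt_1 (m n : ℕ) (hm : 0 < m) (hn : 0 < n) (w : ℕ → ℕ)
    (hwmono : ∀ k l, 1 ≤ k → k < l → l ≤ m → w k < w l)
    (hwlb : ∀ k, 1 ≤ k → k ≤ m → 1 ≤ w k)
    (hwub : ∀ k, 1 ≤ k → k ≤ m → w k ≤ m + n)
    (hslope : ∃ k, 1 ≤ k ∧ k ≤ m ∧ m * w k < (m + n) * k) :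
    ∃ t : ℕ → ℝ,
      (∀ i j, 1 ≤ i → i ≤ j → j ≤ m + n → t j ≤ t i) ∧
      (∑ i ∈ Finset.Icc 1 (m + n), t i = 0) ∧
      0 < ∑ k ∈ Finset.Icc 1 m, t (w k) := by
  obtain ⟨k, hk1, hkm, hkslope⟩ := hslope
  set d := w k with hd
  have hd1 : 1 ≤ d := hwlb k hk1 hkm
  have hdmn : d ≤ m + n := hwub k hk1 hkm
  refine ⟨fun i => if i ≤ d then ((m : ℝ) + n - d) else -(d : ℝ), ?_, ?_, ?_⟩
  · intro i j hi hij hj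
    by_cases h1 : j ≤ d
    · simp [h1, le_trans hij h1]
    · by_cases h2 : i ≤ d
      · simp only [h1, h2, if_true, if_false]
        have : (0:ℝ) ≤ (m:ℝ) + n := by positivity
        linarith
      · simp [h1, h2]
  · have hsplit : ∑ i ∈ Finset.Ioc 0 d, (if i ≤ d then ((m : ℝ) + n - d) else -(d:ℝ))
        + ∑ i ∈ Finset.Ioc d (m+n), (if i ≤ d then ((m : ℝ) + n - d) else -(d:ℝ))
        = ∑ i ∈ Finset.Ioc 0 (m+n), (if i ≤ d then ((m : ℝ) + n - d) else -(d:ℝ)) :=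
      Finset.sum_Ioc_consecutive _ (Nat.zero_le d) hdmn
    have h1 : ∑ i ∈ Finset.Ioc 0 d, (if i ≤ d then ((m : ℝ) + n - d) else -(d:ℝ))
        = d * ((m : ℝ) + n - d) := by
      rw [Finset.sum_congr rfl (fun i hi => if_pos (Finset.mem_Ioc.mp hi).2),
        Finset.sum_const, Nat.card_Ioc]
      simp [mul_comm]
    have h2 : ∑ i ∈ Finset.Ioc d (m+n), (if i ≤ d then ((m : ℝ) + n - d) else -(d:ℝ))
        = ((m+n-d : ℕ) : ℝ) * (-(d:ℝ)) := by
      rw [Finset.sum_congr rfl (fun i hi => if_neg (not_le.mpr (Finset.mem_Ioc.mp hi).1)),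
        Finset.sum_const, Nat.card_Ioc]
      simp [mul_comm]
    have : Finset.Icc 1 (m+n) = Finset.Ioc 0 (m+n) := rfl
    rw [this, ← hsplit, h1, h2]
    have : ((m+n-d : ℕ) : ℝ) = (m : ℝ) + n - d := by
      push_cast [Nat.cast_sub hdmn]; ring
    rw [this]; ring
  · have hle : ∀ j ∈ Finset.Ioc 0 k, w j ≤ d := by
      intro j hj
      obtain ⟨hj0, hjk⟩ := Finset.mem_Ioc.mp hj
      rcases eq_or_lt_of_le hjk with h | h
      · rw [h]
      · exact (hwmono j k hj0 h hkm).le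
    have hsplit : ∑ j ∈ Finset.Ioc 0 k, (if w j ≤ d then ((m : ℝ) + n - d) else -(d:ℝ))
        + ∑ j ∈ Finset.Ioc k m, (if w j ≤ d then ((m : ℝ) + n - d) else -(d:ℝ))
        = ∑ j ∈ Finset.Ioc 0 m, (if w j ≤ d then ((m : ℝ) + n - d) else -(d:ℝ)) :=
      Finset.sum_Ioc_consecutive _ (Nat.zero_le k) hkm
    have h1 : ∑ j ∈ Finset.Ioc 0 k, (if w j ≤ d then ((m : ℝ) + n - d) else -(d:ℝ))
        = k * ((m : ℝ) + n - d) := by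
      rw [Finset.sum_congr rfl (fun j hj => if_pos (hle j hj)),
        Finset.sum_const, Nat.card_Ioc]
      simp [mul_comm]
    have h2 : ∑ j ∈ Finset.Ioc k m, (if w j ≤ d then ((m : ℝ) + n - d) else -(d:ℝ))
        = ((m-k : ℕ) : ℝ) * (-(d:ℝ)) := by
      have hpt : ∀ j ∈ Finset.Ioc k m,
          (if w j ≤ d then ((m : ℝ) + n - d) else -(d:ℝ)) = -(d:ℝ) := by
        intro j hj
        obtain ⟨hkj, hjm⟩ := Finset.mem_Ioc.mp hj
        exact if_neg (not_le.mpr (hwmono k j hk1 hkj hjm))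
      rw [Finset.sum_congr rfl hpt, Finset.sum_const, Nat.card_Ioc]
      simp [mul_comm]
    have : Finset.Icc 1 m = Finset.Ioc 0 m := rfl
    rw [this, ← hsplit, h1, h2]
    have hcast : ((m-k : ℕ) : ℝ) = (m : ℝ) - k := by
      push_cast [Nat.cast_sub hkm]; ring
    rw [hcast]
    have hsl : (m : ℝ) * d < ((m : ℝ) + n) * k := by exact_mod_cast hkslope
    nlinarith
end

section
/- Let m, n be positive integers and let w_1 < ... < w_m be integers in {1, ..., m+n}. The following are equivalent: (1) there exist reals t_1 ≥ ... ≥ t_{m+n} with Σ t_i = 0 and Σ_{j=1}^m t_{w_j} > 0; (2) there exists k with 1 ≤ k ≤ m such that m·w_k < (m+n)·k. -/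
private lemma telescope_Icc (f : ℕ → ℝ) (a b : ℕ) (h : a ≤ b + 1) :
    ∑ r ∈ Finset.Icc a b, (f r - f (r + 1)) = f a - f (b + 1) := by
  induction b with
  | zero =>
    interval_cases a
    · simp
    · simp
  | succ b ih =>
    rcases Nat.eq_or_lt_of_le h with heq | hlt
    · rw [← heq, Finset.Icc_eq_empty (by omega)]
      simp
    · have h' : a ≤ b + 1 := by omega
      rw [Finset.sum_Icc_succ_top h', ih h']
      ring

private lemma weighted_Icc (f : ℕ → ℝ) (b : ℕ) :
    ∑ r ∈ Finset.Icc 1 b, (f r - f (r + 1)) * (r : ℝ)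
      = (∑ r ∈ Finset.Icc 1 b, f r) - (b : ℝ) * f (b + 1) := by
  induction b with
  | zero => simp
  | succ b ih =>
    rw [Finset.sum_Icc_succ_top (by omega : 1 ≤ b + 1),
        Finset.sum_Icc_succ_top (by omega : 1 ≤ b + 1), ih]
    push_cast
    ring

/-- Stability criterion: a destabilizing weakly decreasing sequence summing to zero with
`∑ t_{w_j} > 0` exists if and only if `m·w_k < (m+n)·k` for some `k`. -/
theorem stmt_2 (m n : ℕ) (hm : 0 < m) (hn : 0 < n) (w : ℕ → ℕ)
    (hwmono : ∀ k l, 1 ≤ k → k < l → l ≤ m → w k < w l)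
    (hwlb : ∀ k, 1 ≤ k → k ≤ m → 1 ≤ w k)
    (hwub : ∀ k, 1 ≤ k → k ≤ m → w k ≤ m + n) :
    (∃ t : ℕ → ℝ,
      (∀ i j, 1 ≤ i → i ≤ j → j ≤ m + n → t j ≤ t i) ∧
      (∑ i ∈ Finset.Icc 1 (m + n), t i = 0) ∧
      0 < ∑ k ∈ Finset.Icc 1 m, t (w k)) ↔
    (∃ k, 1 ≤ k ∧ k ≤ m ∧ m * w k < (m + n) * k) := by
  constructor
  · rintro ⟨t, hmono, hsum, hpos⟩
    by_contra hcon
    push_neg at hcon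
    -- hcon : ∀ k, 1 ≤ k → k ≤ m → (m+n)*k ≤ m * w k
    obtain ⟨M, hM⟩ : ∃ M, m + n = M + 1 := ⟨m + n - 1, by omega⟩
    rw [hM] at hsum
    -- pointwise decomposition identity
    have key : ∀ i, 1 ≤ i → i ≤ M + 1 →
        ∑ r ∈ Finset.Icc 1 M, (t r - t (r + 1)) *
          ((if i ≤ r then ((M : ℝ) + 1) else 0) - (r : ℝ)) = ((M : ℝ) + 1) * t i := by
      intro i hi1 hiN
      have split : ∑ r ∈ Finset.Icc 1 M, (t r - t (r + 1)) *
            ((if i ≤ r then ((M : ℝ) + 1) else 0) - (r : ℝ))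
          = (∑ r ∈ Finset.Icc 1 M, (t r - t (r + 1)) * (if i ≤ r then ((M : ℝ) + 1) else 0))
            - ∑ r ∈ Finset.Icc 1 M, (t r - t (r + 1)) * (r : ℝ) := by
        rw [← Finset.sum_sub_distrib]
        exact Finset.sum_congr rfl fun r _ => by ring
      have hfilter : (Finset.Icc 1 M).filter (fun r => i ≤ r) = Finset.Icc i M := by
        ext r
        simp only [Finset.mem_filter, Finset.mem_Icc]
        omega
      have part1 : ∑ r ∈ Finset.Icc 1 M, (t r - t (r + 1)) * (if i ≤ r then ((M : ℝ) + 1) else 0)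
          = ((M : ℝ) + 1) * (t i - t (M + 1)) := by
        calc ∑ r ∈ Finset.Icc 1 M, (t r - t (r + 1)) * (if i ≤ r then ((M : ℝ) + 1) else 0)
            = ∑ r ∈ Finset.Icc 1 M, (if i ≤ r then (t r - t (r + 1)) * ((M : ℝ) + 1) else 0) := by
              exact Finset.sum_congr rfl fun r _ => by split_ifs <;> simp
          _ = ∑ r ∈ (Finset.Icc 1 M).filter (fun r => i ≤ r),
                (t r - t (r + 1)) * ((M : ℝ) + 1) := (Finset.sum_filter _ _).symm
          _ = (∑ r ∈ Finset.Icc i M, (t r - t (r + 1))) * ((M : ℝ) + 1) := by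
              rw [hfilter, Finset.sum_mul]
          _ = ((M : ℝ) + 1) * (t i - t (M + 1)) := by
              rw [telescope_Icc t i M (by omega)]
              ring
      have hsum' : ∑ r ∈ Finset.Icc 1 M, t r = -t (M + 1) := by
        have := Finset.sum_Icc_succ_top (by omega : 1 ≤ M + 1) t
        rw [hsum] at this
        linarith
      have part2 : ∑ r ∈ Finset.Icc 1 M, (t r - t (r + 1)) * (r : ℝ)
          = -(((M : ℝ) + 1) * t (M + 1)) := by
        rw [weighted_Icc, hsum']
        ring
      rw [split, part1, part2]
      ring
    -- swap the sums
    have hswap : ((M : ℝ) + 1) * ∑ k ∈ Finset.Icc 1 m, t (w k)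
        = ∑ r ∈ Finset.Icc 1 M, (t r - t (r + 1)) *
            (((M : ℝ) + 1) * (((Finset.Icc 1 m).filter (fun k => w k ≤ r)).card : ℝ)
              - (m : ℝ) * r) := by
      have e1 : ∀ k ∈ Finset.Icc 1 m, ((M : ℝ) + 1) * t (w k)
          = ∑ r ∈ Finset.Icc 1 M, (t r - t (r + 1)) *
              ((if w k ≤ r then ((M : ℝ) + 1) else 0) - (r : ℝ)) := by
        intro k hk
        rw [Finset.mem_Icc] at hk
        exact (key (w k) (hwlb k hk.1 hk.2) (by have := hwub k hk.1 hk.2; omega)).symm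
      rw [Finset.mul_sum, Finset.sum_congr rfl e1, Finset.sum_comm]
      refine Finset.sum_congr rfl fun r hr => ?_
      rw [← Finset.mul_sum]
      congr 1
      rw [Finset.sum_sub_distrib, ← Finset.sum_filter, Finset.sum_const, Finset.sum_const,
          Nat.card_Icc]
      simp only [Nat.add_sub_cancel, nsmul_eq_mul]
      ring
    -- combinatorial bound on each coefficient
    have hF : ∀ r, (m + n) * ((Finset.Icc 1 m).filter (fun k => w k ≤ r)).card ≤ m * r := by
      intro r
      set F := (Finset.Icc 1 m).filter (fun k => w k ≤ r) with hFdef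
      rcases F.eq_empty_or_nonempty with hFe | hFne
      · rw [hFe]; simp
      · have hk0 := F.max'_mem hFne
        set k0 := F.max' hFne with hk0def
        rw [hFdef, Finset.mem_filter, Finset.mem_Icc] at hk0
        obtain ⟨⟨hk01, hk0m⟩, hk0r⟩ := hk0
        have hsub : F ⊆ Finset.Icc 1 k0 := by
          intro k hk
          have hle := F.le_max' k hk
          rw [hFdef, Finset.mem_filter, Finset.mem_Icc] at hk
          rw [Finset.mem_Icc]
          exact ⟨hk.1.1, hle⟩
        have hcard : F.card ≤ k0 := by
          have := Finset.card_le_card hsub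
          simpa [Nat.card_Icc] using this
        calc (m + n) * F.card ≤ (m + n) * k0 := Nat.mul_le_mul_left _ hcard
          _ ≤ m * w k0 := hcon k0 hk01 hk0m
          _ ≤ m * r := Nat.mul_le_mul_left _ hk0r
    -- conclude
    have hnonpos : ∑ r ∈ Finset.Icc 1 M, (t r - t (r + 1)) *
        (((M : ℝ) + 1) * (((Finset.Icc 1 m).filter (fun k => w k ≤ r)).card : ℝ)
          - (m : ℝ) * r) ≤ 0 := by
      apply Finset.sum_nonpos
      intro r hr
      rw [Finset.mem_Icc] at hr
      have hd : 0 ≤ t r - t (r + 1) := by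
        have := hmono r (r + 1) hr.1 (by omega) (by omega)
        linarith
      have hFr := hF r
      have hcast : ((M : ℝ) + 1) * (((Finset.Icc 1 m).filter (fun k => w k ≤ r)).card : ℝ)
          - (m : ℝ) * r ≤ 0 := by
        have h1 : ((m + n : ℕ) : ℝ) * (((Finset.Icc 1 m).filter (fun k => w k ≤ r)).card : ℝ)
            ≤ (m : ℝ) * r := by exact_mod_cast hFr
        have h2 : ((m + n : ℕ) : ℝ) = (M : ℝ) + 1 := by exact_mod_cast hM
        linarith [h1, h2 ▸ h1]
      exact mul_nonpos_iff.mpr (Or.inl ⟨hd, hcast⟩)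
    have hMpos : (0 : ℝ) < (M : ℝ) + 1 := by positivity
    nlinarith [mul_pos hMpos hpos]
  · rintro ⟨k, hk1, hkm, hk⟩
    set a := w k with ha
    have ha1 : 1 ≤ a := hwlb k hk1 hkm
    have haN : a ≤ m + n := hwub k hk1 hkm
    have haR : (a : ℝ) ≤ (m : ℝ) + n := by exact_mod_cast haN
    have ha1R : (1 : ℝ) ≤ (a : ℝ) := by exact_mod_cast ha1
    refine ⟨fun i => if i ≤ a then ((m : ℝ) + n - a) else -(a : ℝ), ?_, ?_, ?_⟩
    · intro i j hi hij hjN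
      simp only
      split_ifs with h1 h2 h2
      · exact le_rfl
      · exact absurd (hij.trans h1) h2
      · linarith
      · exact le_rfl
    · have e : Finset.Icc 1 (m + n) = Finset.Ioc 0 (m + n) := by
        ext i; simp [Finset.mem_Icc, Finset.mem_Ioc]; omega
      rw [e, ← Finset.sum_Ioc_consecutive _ (Nat.zero_le a) haN]
      have e1 : ∀ i ∈ Finset.Ioc 0 a,
          (if i ≤ a then ((m : ℝ) + n - a) else -(a : ℝ)) = ((m : ℝ) + n - a) := by
        intro i hi; rw [Finset.mem_Ioc] at hi; rw [if_pos hi.2]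
      have e2 : ∀ i ∈ Finset.Ioc a (m + n),
          (if i ≤ a then ((m : ℝ) + n - a) else -(a : ℝ)) = -(a : ℝ) := by
        intro i hi; rw [Finset.mem_Ioc] at hi; rw [if_neg (by omega)]
      rw [Finset.sum_congr rfl e1, Finset.sum_congr rfl e2, Finset.sum_const, Finset.sum_const,
          Nat.card_Ioc, Nat.card_Ioc]
      simp only [Nat.sub_zero, nsmul_eq_mul]
      push_cast [Nat.cast_sub haN]
      ring
    · have e : Finset.Icc 1 m = Finset.Ioc 0 m := by
        ext i; simp [Finset.mem_Icc, Finset.mem_Ioc]; omega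
      rw [e, ← Finset.sum_Ioc_consecutive _ (Nat.zero_le k) hkm]
      have e1 : ∀ j ∈ Finset.Ioc 0 k,
          (if w j ≤ a then ((m : ℝ) + n - a) else -(a : ℝ)) = ((m : ℝ) + n - a) := by
        intro j hj; rw [Finset.mem_Ioc] at hj
        have hwj : w j ≤ a := by
          rcases eq_or_lt_of_le hj.2 with h | h
          · rw [h]
          · exact le_of_lt (hwmono j k hj.1 h hkm)
        rw [if_pos hwj]
      rw [Finset.sum_congr rfl e1, Finset.sum_const, Nat.card_Ioc]
      have e2 : ((m : ℝ) - k) * (-(a : ℝ))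
          ≤ ∑ j ∈ Finset.Ioc k m, (if w j ≤ a then ((m : ℝ) + n - a) else -(a : ℝ)) := by
        have hb : ∀ j ∈ Finset.Ioc k m,
            -(a : ℝ) ≤ (if w j ≤ a then ((m : ℝ) + n - a) else -(a : ℝ)) := by
          intro j hj
          split_ifs
          · linarith
          · exact le_rfl
        calc ((m : ℝ) - k) * (-(a : ℝ)) = ((m - k : ℕ) : ℝ) * (-(a : ℝ)) := by
              rw [Nat.cast_sub hkm]
          _ = (Finset.Ioc k m).card • (-(a : ℝ)) := by rw [Nat.card_Ioc, nsmul_eq_mul]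
          _ ≤ _ := Finset.card_nsmul_le_sum _ _ _ hb
      have hkR : (m : ℝ) * (a : ℝ) < ((m : ℝ) + n) * k := by exact_mod_cast hk
      simp only [Nat.sub_zero, nsmul_eq_mul]
      nlinarith [e2, hkR]
end

section
/- Let δ and a be nonzero vectors in a real inner product space, and χ a linear functional with χ(δ) < 0, χ(a) < 0, and ⟨δ, a⟩ ≤ 0. Then for all sufficiently large N > 0, χ(Nδ + a)/‖Nδ + a‖ < χ(δ)/‖δ‖. -/
set_option maxHeartbeats 800000


/-- Destabilization inequality: if `χ δ < 0`, `χ a < 0` and `⟨δ, a⟩ ≤ 0` with `δ, a ≠ 0`,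
then for all sufficiently large `N`, `χ(Nδ + a)/‖Nδ + a‖ < χ(δ)/‖δ‖`. -/
theorem stmt_9 {E : Type*} [NormedAddCommGroup E] [InnerProductSpace ℝ E]
    (χ : E →ₗ[ℝ] ℝ) (δ a : E) (hδ : δ ≠ 0) (ha : a ≠ 0)
    (hχδ : χ δ < 0) (hχa : χ a < 0) (hip : (inner ℝ δ a : ℝ) ≤ 0) :
    ∀ᶠ N : ℝ in Filter.atTop, χ (N • δ + a) / ‖N • δ + a‖ < χ δ / ‖δ‖ := by
  have hd : (0:ℝ) < ‖δ‖ := norm_pos_iff.mpr hδ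
  have hb : (0:ℝ) < ‖a‖ := norm_pos_iff.mpr ha
  filter_upwards [Filter.eventually_ge_atTop
      (max (‖a‖ / ‖δ‖ + 1) (χ δ * ‖a‖ ^ 2 / (2 * χ a * ‖δ‖ ^ 2) + 1))] with N hN
  have hN1 : ‖a‖ / ‖δ‖ + 1 ≤ N := le_trans (le_max_left _ _) hN
  have hN2 : χ δ * ‖a‖ ^ 2 / (2 * χ a * ‖δ‖ ^ 2) + 1 ≤ N := le_trans (le_max_right _ _) hN
  have hNpos : 0 < N := by
    have : 0 ≤ ‖a‖ / ‖δ‖ := by positivity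
    linarith
  have hm0 : ‖N • δ‖ - ‖a‖ ≤ ‖N • δ + a‖ := by
    have h := norm_sub_le (N • δ + a) a
    simpa using h
  have hnsmul : ‖N • δ‖ = N * ‖δ‖ := by
    rw [norm_smul, Real.norm_eq_abs, abs_of_pos hNpos]
  have hm : (0:ℝ) < ‖N • δ + a‖ := by
    rw [hnsmul] at hm0
    have : ‖a‖ / ‖δ‖ * ‖δ‖ = ‖a‖ := div_mul_cancel₀ _ hd.ne'
    nlinarith
  have hmsq : ‖N • δ + a‖ ^ 2 = N ^ 2 * ‖δ‖ ^ 2 + 2 * N * (inner ℝ δ a : ℝ) + ‖a‖ ^ 2 := by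
    rw [@norm_add_sq_real, norm_smul, real_inner_smul_left, Real.norm_eq_abs,
      abs_of_pos hNpos]
    ring
  have hchi : χ (N • δ + a) = N * χ δ + χ a := by
    simp [map_add, map_smul]
  rw [hchi, div_lt_div_iff₀ hm hd]
  -- key bound: m^2 ≤ N^2 d^2 + b^2
  have hmle : ‖N • δ + a‖ ^ 2 ≤ N ^ 2 * ‖δ‖ ^ 2 + ‖a‖ ^ 2 := by
    rw [hmsq]; nlinarith
  -- from hN2 : N * (2 q d^2) ≤ p b^2 + 2 q d^2 (multiplying by negative flips)
  have hq2 : 2 * χ a * ‖δ‖ ^ 2 < 0 := by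
    have h2 : (0:ℝ) < ‖δ‖ ^ 2 := by positivity
    nlinarith
  have hN2' : N * (2 * χ a * ‖δ‖ ^ 2) ≤ χ δ * ‖a‖ ^ 2 + 2 * χ a * ‖δ‖ ^ 2 := by
    have := (div_le_iff_of_neg hq2).mp (by linarith : χ δ * ‖a‖ ^ 2 / (2 * χ a * ‖δ‖ ^ 2) ≤ N - 1)
    nlinarith
  -- now the squared inequality
  have hsq : (χ δ) ^ 2 * ‖N • δ + a‖ ^ 2 < ((N * χ δ + χ a) * ‖δ‖) ^ 2 := by
    have h1 : (χ δ) ^ 2 * ‖N • δ + a‖ ^ 2 ≤ (χ δ) ^ 2 * (N ^ 2 * ‖δ‖ ^ 2 + ‖a‖ ^ 2) := by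
      nlinarith [sq_nonneg (χ δ)]
    nlinarith [sq_nonneg (χ a * ‖δ‖), mul_pos (mul_pos (neg_pos.mpr hχδ) (neg_pos.mpr hχa)) (by positivity : (0:ℝ) < ‖δ‖ ^ 2)]
  have hneg1 : χ δ * ‖N • δ + a‖ < 0 := mul_neg_of_neg_of_pos hχδ hm
  have hneg2 : (N * χ δ + χ a) * ‖δ‖ < 0 := by
    have hnum : N * χ δ + χ a < 0 := by nlinarith
    exact mul_neg_of_neg_of_pos hnum hd
  nlinarith [hsq, hneg1, hneg2, sq_nonneg (χ δ * ‖N • δ + a‖ - (N * χ δ + χ a) * ‖δ‖)]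
end
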